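/- arXiv:1502.02225 — 5 statements merged into one kernel-verified Lean document; each statement's English description precedes it below -/
import Mathlib

section
/- Fix a ∈ (0, 1/2]. If α ∈ ℝ is such that 1 + α·r'^2 < K_a(r)/(sin(πa)·log(e^{R(a)/2}/r')) holds for every r ∈ (0,1), then α ≤ π/(R(a)·sin(πa)) − 1; i.e., the constant α₀ = π/(R(a)·sin(πa)) − 1 in the lower bound is best possible. -/
open Real Set Filter Topology

/-- The digamma function `ψ(x) = Γ'(x)/Γ(x)`. -/
noncomputable def digamma (x : ℝ) : ℝ := deriv Real.Gamma x / Real.Gamma x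

/-- The Ramanujan constant function `R(x) = -2γ - ψ(x) - ψ(1-x)`. -/
noncomputable def ramanujanR (x : ℝ) : ℝ :=
  -2 * Real.eulerMascheroniConstant - digamma x - digamma (1 - x)

/-- The Riemann zeta function as a real series `ζ(s) = Σ_{n=1}^∞ n^{-s}`. -/
noncomputable def zetaR (s : ℝ) : ℝ := ∑' n : ℕ, 1 / ((n : ℝ) + 1) ^ s

/-- The generalized elliptic integral of the first kind
`K_a(r) = (π/2) Σ_{n=0}^∞ ((a)_n (1-a)_n / (n!)^2) r^(2n)`. -/
noncomputable def Ka (a r : ℝ) : ℝ :=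
  Real.pi / 2 * ∑' n : ℕ,
    (Polynomial.eval a (ascPochhammer ℝ n) * Polynomial.eval (1 - a) (ascPochhammer ℝ n)
      / (Nat.factorial n : ℝ) ^ 2) * r ^ (2 * n)

/-- The generalized elliptic integral of the second kind
`E_a(r) = (π/2) Σ_{n=0}^∞ ((a-1)_n (1-a)_n / (n!)^2) r^(2n)`. -/
noncomputable def Ea (a r : ℝ) : ℝ :=
  Real.pi / 2 * ∑' n : ℕ,
    (Polynomial.eval (a - 1) (ascPochhammer ℝ n) * Polynomial.eval (1 - a) (ascPochhammer ℝ n)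
      / (Nat.factorial n : ℝ) ^ 2) * r ^ (2 * n)

/-!
Let `r → 0⁺`. The left-hand side tends to `1 + α`. Since the coefficients of the series for
`K_a` lie in `[0, 1]`, `K_a(r) → K_a(0) = π/2`, while the logarithm tends to `R(a)/2`; so the
right-hand side tends to `π / (R(a) sin(πa))`, which must therefore dominate `1 + α`. The
limit of the denominator is nonzero because `R(a) > 0`: the digamma function is increasing (`log Γ` is convex), so
`R(a) ≥ -2γ - ψ(1/2) - ψ(1) = 2 log 2`.
-/

open scoped Nat

lemma Real.differentiableAt_Gamma_of_pos {x : ℝ} (hx : 0 < x) :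
    DifferentiableAt ℝ Real.Gamma x :=
  Real.differentiableOn_Gamma_Ioi.differentiableAt (Ioi_mem_nhds hx)

lemma deriv_log_Gamma {x : ℝ} (hx : 0 < x) : deriv (Real.log ∘ Real.Gamma) x = digamma x :=
  deriv.log (Real.differentiableAt_Gamma_of_pos hx) (Real.Gamma_pos_of_pos hx).ne'

lemma digamma_monotoneOn : MonotoneOn digamma (Ioi 0) := by
  have hmono := Real.convexOn_log_Gamma.monotoneOn_deriv fun x (hx : 0 < x) =>
    (Real.differentiableAt_Gamma_of_pos hx).log (Real.Gamma_pos_of_pos hx).ne'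
  intro x (hx : 0 < x) y (hy : 0 < y) hxy
  simpa only [deriv_log_Gamma hx, deriv_log_Gamma hy] using hmono hx hy hxy

lemma digamma_one : digamma 1 = -eulerMascheroniConstant := by
  rw [digamma, Real.hasDerivAt_Gamma_one.deriv, Real.Gamma_one, div_one]

lemma digamma_one_half : digamma (1 / 2) = -eulerMascheroniConstant - 2 * log 2 := by
  rw [digamma, Real.hasDerivAt_Gamma_one_half.deriv, Real.Gamma_one_half_eq]
  field_simp
  ring

lemma ramanujanR_pos {a : ℝ} (ha : a ∈ Ioc (0 : ℝ) (1 / 2)) : 0 < ramanujanR a := by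
  obtain ⟨ha0, ha1⟩ := ha
  have h1 : digamma a ≤ digamma (1 / 2) :=
    digamma_monotoneOn ha0 (by norm_num : (0 : ℝ) < 1 / 2) ha1
  have h2 : digamma (1 - a) ≤ digamma 1 :=
    digamma_monotoneOn (by linarith : 0 < 1 - a) (zero_lt_one' ℝ) (by linarith)
  have hlog2 : 0 < log 2 := log_pos one_lt_two
  rw [digamma_one_half] at h1
  rw [digamma_one] at h2
  rw [ramanujanR]
  linarith

lemma ascPochhammer_eval_le_factorial {x : ℝ} (h0 : 0 ≤ x) (h1 : x ≤ 1) (n : ℕ) :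
    (ascPochhammer ℝ n).eval x ≤ n ! := by
  induction n with
  | zero => simp
  | succ n ih =>
    rw [ascPochhammer_succ_eval, Nat.factorial_succ, Nat.cast_mul, mul_comm ((n + 1 : ℕ) : ℝ)]
    push_cast
    exact mul_le_mul ih (by linarith) (by linarith) (Nat.cast_nonneg _)

lemma tendsto_tsum_mul_pow_nhds_zero {c : ℕ → ℝ} {C : ℝ} (hc : ∀ n, |c n| ≤ C) :
    Tendsto (fun x => ∑' n, c n * x ^ n) (𝓝 0) (𝓝 (c 0)) := by
  have hcont : ContinuousOn (fun x => ∑' n, c n * x ^ n) (Icc (-(1 / 2)) (1 / 2)) := by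
    refine continuousOn_tsum (u := fun n => C * (1 / 2) ^ n) (fun n => by fun_prop)
      ((summable_geometric_two).mul_left C) fun n x hx => ?_
    rw [norm_mul, norm_pow, Real.norm_eq_abs, Real.norm_eq_abs]
    exact mul_le_mul (hc n) (pow_le_pow_left₀ (abs_nonneg x) (abs_le.2 hx) n)
      (by positivity) ((abs_nonneg _).trans (hc n))
  have h0 : ∑' n, c n * (0 : ℝ) ^ n = c 0 :=
    (tsum_eq_single 0 fun n hn => by simp [hn]).trans (by simp)
  have hnhds : Icc (-(1 / 2)) (1 / 2) ∈ 𝓝 (0 : ℝ) := Icc_mem_nhds (by norm_num) (by norm_num)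
  simpa only [h0] using (hcont.continuousAt hnhds).tendsto

lemma tendsto_Ka_nhds_zero {a : ℝ} (ha : a ∈ Ioo (0 : ℝ) 1) :
    Tendsto (Ka a) (𝓝 0) (𝓝 (π / 2)) := by
  obtain ⟨ha0, ha1⟩ := ha
  set c : ℕ → ℝ := fun n =>
    (ascPochhammer ℝ n).eval a * (ascPochhammer ℝ n).eval (1 - a) / (n ! : ℝ) ^ 2
  have hc : ∀ n, |c n| ≤ 1 := fun n => by
    have hp1 := ascPochhammer_pos n a ha0
    have hp2 := ascPochhammer_pos n (1 - a) (sub_pos.2 ha1)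
    rw [abs_of_nonneg (div_nonneg (mul_nonneg hp1.le hp2.le) (sq_nonneg _)),
      div_le_one (by positivity), sq]
    exact mul_le_mul (ascPochhammer_eval_le_factorial ha0.le ha1.le n)
      (ascPochhammer_eval_le_factorial (sub_pos.2 ha1).le (by linarith) n)
      hp2.le (Nat.cast_nonneg _)
  have hKa : Ka a = fun r => π / 2 * ∑' n, c n * (r ^ 2) ^ n := by
    ext r; simp only [Ka, c, pow_mul]
  have hsq : Tendsto (fun r : ℝ => r ^ 2) (𝓝 0) (𝓝 0) := by
    simpa using (continuous_pow 2).tendsto (0 : ℝ)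
  rw [hKa]
  simpa [c] using ((tendsto_tsum_mul_pow_nhds_zero hc).comp hsq).const_mul (π / 2)

theorem stmt2 (a : ℝ) (ha : a ∈ Set.Ioc (0 : ℝ) (1/2)) (α : ℝ)
    (h : ∀ r ∈ Set.Ioo (0 : ℝ) 1,
      1 + α * (Real.sqrt (1 - r^2))^2 <
        Ka a r / (Real.sin (Real.pi * a) *
          Real.log (Real.exp (ramanujanR a / 2) / Real.sqrt (1 - r^2)))) :
    α ≤ Real.pi / (ramanujanR a * Real.sin (Real.pi * a)) - 1 := by
  set R := ramanujanR a
  have hR : 0 < R := ramanujanR_pos ha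
  have hs : 0 < sin (π * a) :=
    sin_pos_of_pos_of_lt_pi (mul_pos pi_pos ha.1) (by nlinarith [pi_pos, ha.2])
  have hr' : Tendsto (fun r : ℝ => √(1 - r ^ 2)) (𝓝 0) (𝓝 1) := by
    have hcont : Continuous fun r : ℝ => √(1 - r ^ 2) := by fun_prop
    simpa using hcont.tendsto 0
  have hLHS : Tendsto (fun r : ℝ => 1 + α * √(1 - r ^ 2) ^ 2) (𝓝 0) (𝓝 (1 + α)) := by
    simpa using ((hr'.pow 2).const_mul α).const_add 1
  have hden : Tendsto (fun r : ℝ => sin (π * a) * log (exp (R / 2) / √(1 - r ^ 2))) (𝓝 0)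
      (𝓝 (sin (π * a) * (R / 2))) := by
    have hlog := ((tendsto_const_nhds (x := exp (R / 2))).div hr' one_ne_zero).log
      (by rw [div_one]; exact exp_ne_zero _)
    simpa only [div_one, log_exp, Pi.div_apply] using hlog.const_mul (sin (π * a))
  have hRHS := (tendsto_Ka_nhds_zero ⟨ha.1, by linarith [ha.2]⟩).div hden (by positivity)
  have hle : 1 + α ≤ π / 2 / (sin (π * a) * (R / 2)) :=
    le_of_tendsto_of_tendsto (hLHS.mono_left nhdsWithin_le_nhds)
      (hRHS.mono_left nhdsWithin_le_nhds)
      (eventually_of_mem (Ioo_mem_nhdsGT zero_lt_one) fun r hr => (h r hr).le)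
  have hlimit : π / 2 / (sin (π * a) * (R / 2)) = π / (R * sin (π * a)) := by
    field_simp
  linarith
end

section
/- For every x ∈ (0, 1), the Ramanujan constant function has the convergent series expansion R(x) = 1/x + Σ_{k=1}^∞ 2·ζ(2k+1)·x^{2k}, where ζ denotes the Riemann zeta function. -/
open Real Set Filter Topology

/-!
Differentiating the Bohr–Mollerup limit `log Γ = lim logGammaSeq` termwise (the derivatives
converge uniformly) gives `ψ(1 + y) = -γ + ∑ₘ (1/(m+1) - 1/(m+1+y))` for `y > -1`. With
`ψ(1 + x) = ψ(x) + 1/x`, the cases `y = x` and `y = -x` give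
`R(x) - 1/x = ∑ₘ (1/(m+1+x) + 1/(m+1-x) - 2/(m+1))`. Each term is a geometric series in
`(x/(m+1))²`, and since all terms are nonnegative the double series may be summed in the other
order, which produces the values `ζ(2k+3)`.
-/

local notation "γ" => Real.eulerMascheroniConstant

lemma hasDerivAt_log_Gamma {x : ℝ} (hx : 0 < x) :
    HasDerivAt (fun t => log (Gamma t)) (digamma x) x :=
  (differentiableAt_Gamma fun m => by linarith [(m.cast_nonneg : (0 : ℝ) ≤ m)]).hasDerivAt.log
    (Gamma_pos_of_pos hx).ne'

lemma digamma_add_one {x : ℝ} (hx : 0 < x) : digamma (x + 1) = digamma x + 1 / x := by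
  have hshift : HasDerivAt (fun t => log (Gamma (t + 1))) (digamma (x + 1)) x :=
    (hasDerivAt_log_Gamma (by linarith)).comp_add_const x 1
  have hfeq : (fun t => log (Gamma t) + log t) =ᶠ[𝓝 x] fun t => log (Gamma (t + 1)) := by
    filter_upwards [lt_mem_nhds hx] with t ht
    rw [Gamma_add_one ht.ne', log_mul ht.ne' (Gamma_pos_of_pos ht).ne', add_comm]
  have hsplit := ((hasDerivAt_log_Gamma hx).add (hasDerivAt_log hx.ne')).congr_of_eventuallyEq
    hfeq.symm
  rw [hshift.unique hsplit, one_div]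

lemma hasDerivAt_logGammaSeq {z : ℝ} (hz : 0 < z) (n : ℕ) :
    HasDerivAt (fun z => BohrMollerup.logGammaSeq z n)
      (log n - ∑ m ∈ Finset.range (n + 1), 1 / (z + m)) z := by
  have hlin : HasDerivAt (fun z : ℝ => z * log n + log n.factorial) (log n) z := by
    simpa using (hasDerivAt_mul_const (log n)).add_const (log n.factorial)
  have hlogs : HasDerivAt (fun z : ℝ => ∑ m ∈ Finset.range (n + 1), log (z + m))
      (∑ m ∈ Finset.range (n + 1), 1 / (z + m)) z :=
    HasDerivAt.fun_sum fun m _ => by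
      simpa using ((hasDerivAt_id z).add_const (m : ℝ)).log (by positivity)
  exact hlin.sub hlogs

lemma abs_one_div_sub_one_div_le {w c : ℝ} {m : ℕ} (hm : 1 ≤ m) (hw : -1 < w) (hc : |w| ≤ c) :
    |1 / ((m : ℝ) + 1) - 1 / (w + m + 1)| ≤ 2 * c / ((m : ℝ) + 1) ^ 2 := by
  have hm' : (1 : ℝ) ≤ m := by exact_mod_cast hm
  have hpos : 0 < w + m + 1 := by linarith
  have hden : ((m : ℝ) + 1) ^ 2 ≤ 2 * (((m : ℝ) + 1) * (w + m + 1)) := by nlinarith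
  have hprod : 0 < ((m : ℝ) + 1) * (w + m + 1) := mul_pos (by positivity) hpos
  rw [div_sub_div _ _ (by positivity) hpos.ne', abs_div, abs_of_pos hprod]
  calc |1 * (w + m + 1) - (m + 1) * 1| / (((m : ℝ) + 1) * (w + m + 1))
      = |w| / (((m : ℝ) + 1) * (w + m + 1)) := by ring_nf
    _ ≤ 2 * c / ((m : ℝ) + 1) ^ 2 := by
      rw [div_le_div_iff₀ hprod (by positivity)]
      nlinarith [abs_nonneg w]

lemma hasSum_digamma_add_one {y : ℝ} (hy : -1 < y) :
    HasSum (fun m : ℕ => 1 / ((m : ℝ) + 1) - 1 / (y + m + 1)) (digamma (y + 1) + γ) := by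
  set u : ℕ → ℝ → ℝ := fun m w => 1 / ((m : ℝ) + 1) - 1 / (w + m + 1)
  set s : Set ℝ := Ioo (-1) (y + 1)
  -- only eventually: the `m = 0` term `w / (w + 1)` is unbounded as `w → -1`
  have hbound : ∀ᶠ m in atTop, ∀ w ∈ s, ‖u m w‖ ≤ 2 * (y + 2) / ((m : ℝ) + 1) ^ 2 := by
    filter_upwards [eventually_ge_atTop 1] with m hm w hw
    exact abs_one_div_sub_one_div_le hm hw.1 (abs_le.mpr ⟨by linarith [hw.1], by linarith [hw.2]⟩)
  have hmaj : Summable fun m : ℕ => 2 * (y + 2) / ((m : ℝ) + 1) ^ 2 := by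
    simpa [div_eq_mul_inv] using ((summable_nat_add_iff 1).mpr
      (Real.summable_nat_pow_inv.mpr one_lt_two)).mul_left (2 * (y + 2))
  have hconst : Tendsto (fun n : ℕ => log n - (harmonic (n + 1) : ℝ)) atTop (𝓝 (-γ)) := by
    have h := ((tendsto_harmonic_sub_log.comp (tendsto_add_atTop_nat 1)).add
      tendsto_log_nat_add_one_sub_log).neg
    rw [add_zero] at h
    refine h.congr fun n => ?_
    simp only [Function.comp_apply]
    push_cast
    ring
  have hunif : TendstoUniformlyOn
      (fun (n : ℕ) (w : ℝ) => log n - ∑ m ∈ Finset.range (n + 1), 1 / (w + 1 + m))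
      (fun w => -γ + ∑' m, u m w) atTop s := by
    have hpartial := tendstoUniformlyOn_tsum_nat_eventually hmaj hbound
    refine ((hconst.tendstoUniformlyOn_const s).add
      fun v hv => (tendsto_add_atTop_nat 1).eventually (hpartial v hv)).congr ?_
    filter_upwards with n w _
    simp only [Pi.add_apply, u, Finset.sum_sub_distrib, harmonic]
    push_cast
    ring_nf
  have hderiv : HasDerivAt (fun w => log (Gamma (w + 1))) (-γ + ∑' m, u m y) y :=
    hasDerivAt_of_tendstoUniformlyOn isOpen_Ioo hunif
      (.of_forall fun n w hw => (hasDerivAt_logGammaSeq (by linarith [hw.1]) n).comp_add_const w 1)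
      (fun w hw => BohrMollerup.tendsto_log_gamma (by linarith [hw.1])) ⟨hy, lt_add_one y⟩
  have hsum : ∑' m, u m y = digamma (y + 1) + γ := by
    linarith [hderiv.unique ((hasDerivAt_log_Gamma (by linarith)).comp_add_const y 1)]
  exact hsum ▸ (Summable.of_norm_bounded_eventually_nat hmaj
    (hbound.mono fun m hm => hm y ⟨hy, lt_add_one y⟩)).hasSum

lemma hasSum_ramanujanR_sub_one_div {x : ℝ} (hx₀ : 0 < x) (hx₁ : x < 1) :
    HasSum (fun m : ℕ => 1 / ((m : ℝ) + 1 + x) + 1 / ((m : ℝ) + 1 - x) - 2 / ((m : ℝ) + 1))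
      (ramanujanR x - 1 / x) := by
  have h := ((hasSum_digamma_add_one (by linarith : -1 < x)).add
    (hasSum_digamma_add_one (by linarith : -1 < -x))).neg
  have hval : ramanujanR x - 1 / x = -(digamma (x + 1) + γ + (digamma (-x + 1) + γ)) := by
    rw [neg_add_eq_sub, digamma_add_one hx₀]
    unfold ramanujanR
    ring
  exact hval ▸ h.congr_fun fun m => by ring

lemma hasSum_one_div_add_one_div_sub {n x : ℝ} (hx : |x| < n) :
    HasSum (fun k : ℕ => 2 * x ^ (2 * k + 2) / n ^ (2 * k + 3))
      (1 / (n + x) + 1 / (n - x) - 2 / n) := by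
  have hn : 0 < n := (abs_nonneg x).trans_lt hx
  have hxn : x ^ 2 < n ^ 2 := sq_lt_sq.mpr (by rwa [abs_of_pos hn])
  have hr : (x / n) ^ 2 < 1 := by rwa [div_pow, div_lt_one (by positivity)]
  have hg := (hasSum_geometric_of_lt_one (sq_nonneg (x / n)) hr).mul_left (2 * x ^ 2 / n ^ 3)
  have hval : 1 / (n + x) + 1 / (n - x) - 2 / n = 2 * x ^ 2 / n ^ 3 * (1 - (x / n) ^ 2)⁻¹ := by
    have h₁ : n + x ≠ 0 := by linarith [neg_abs_le x]
    have h₂ : n - x ≠ 0 := by linarith [le_abs_self x]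
    have h₃ : n ^ 2 - x ^ 2 ≠ 0 := (sub_pos.mpr hxn).ne'
    rw [div_pow, one_sub_div (by positivity), inv_div]
    field_simp
    ring
  exact hval ▸ hg.congr_fun fun k => by
    rw [← pow_mul, div_pow]
    field_simp
    ring

lemma hasSum_of_hasSum_rows_of_nonneg {α β : Type*} {f : α → β → ℝ} (hf : ∀ a b, 0 ≤ f a b)
    {r : α → ℝ} {c : β → ℝ} {s : ℝ} (hr : ∀ a, HasSum (f a) (r a))
    (hc : ∀ b, HasSum (fun a => f a b) (c b)) (hs : HasSum r s) : HasSum c s := by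
  have hsummable : Summable (Function.uncurry f) :=
    (summable_prod_of_nonneg fun p => hf p.1 p.2).mpr
      ⟨fun a => (hr a).summable, hs.summable.congr fun a => (hr a).tsum_eq.symm⟩
  have hprod : HasSum (Function.uncurry f) s :=
    hs.unique (hsummable.hasSum.prod_fiberwise hr) ▸ hsummable.hasSum
  exact ((Equiv.prodComm β α).hasSum_iff.mpr hprod).prod_fiberwise hc

lemma hasSum_zetaR_natCast {k : ℕ} (hk : 2 ≤ k) :
    HasSum (fun n : ℕ => 1 / ((n : ℝ) + 1) ^ k) (zetaR k) := by
  have hsummable : Summable fun n : ℕ => 1 / ((n : ℝ) + 1) ^ k := by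
    simpa using (summable_nat_add_iff 1).mpr (summable_one_div_nat_pow.mpr hk)
  simpa only [zetaR, Real.rpow_natCast] using hsummable.hasSum

theorem stmt5 (x : ℝ) (hx : x ∈ Set.Ioo (0 : ℝ) 1) :
    HasSum (fun k : ℕ => 2 * zetaR (2 * (k : ℝ) + 3) * x ^ (2 * k + 2))
      (ramanujanR x - 1 / x) := by
  obtain ⟨hx₀, hx₁⟩ := hx
  refine hasSum_of_hasSum_rows_of_nonneg
    (f := fun (m k : ℕ) => 2 * x ^ (2 * k + 2) / ((m : ℝ) + 1) ^ (2 * k + 3))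
    (fun m k => by positivity) (fun m => hasSum_one_div_add_one_div_sub ?_) (fun k => ?_)
    (hasSum_ramanujanR_sub_one_div hx₀ hx₁)
  · rw [abs_of_pos hx₀]
    linarith [(m.cast_nonneg : (0 : ℝ) ≤ m)]
  · have hzeta := (hasSum_zetaR_natCast (by omega : 2 ≤ 2 * k + 3)).mul_left (2 * x ^ (2 * k + 2))
    push_cast at hzeta
    rw [mul_right_comm]
    exact hzeta.congr_fun fun m => (mul_one_div _ _).symm
end

section
/- For every x ∈ (0, 1/2], one has sin(πx) > (π·x(1−x)/2)·(2 + x(1−x)). -/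
open Real Set Filter Topology

/-
By the Taylor bound `sin y > y - y³/6` at `y = πx`, it suffices that the
polynomial `πx - (πx)³/6` dominates the left-hand side. Their difference factors as
`πx²/6 · (3 + (6 - π²)x - 3x²)`, and the quadratic factor stays positive on `[0, 1/2]`
as long as `π² < 10`.
-/

lemma pi_sq_lt_ten : π ^ 2 < 10 := by
  nlinarith [pi_pos, pi_lt_d2]

lemma sub_cube_div_six_sub_eq (x : ℝ) :
    π * x - (π * x) ^ 3 / 6 - π * x * (1 - x) / 2 * (2 + x * (1 - x)) =
      π * x ^ 2 / 6 * (3 + (6 - π ^ 2) * x - 3 * x ^ 2) := by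
  ring

lemma mul_one_sub_mul_two_add_le_sub_cube_div_six {x : ℝ} (hx₀ : 0 ≤ x) (hx₁ : x ≤ 1 / 2) :
    π * x * (1 - x) / 2 * (2 + x * (1 - x)) ≤ π * x - (π * x) ^ 3 / 6 := by
  have hquad : 0 ≤ 3 + (6 - π ^ 2) * x - 3 * x ^ 2 := by
    nlinarith [pi_sq_lt_ten]
  have hprod := mul_nonneg (by positivity : 0 ≤ π * x ^ 2 / 6) hquad
  linarith [sub_cube_div_six_sub_eq x]

theorem stmt9 (x : ℝ) (hx : x ∈ Set.Ioc (0 : ℝ) (1/2)) :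
    Real.pi * x * (1 - x) / 2 * (2 + x * (1 - x)) < Real.sin (Real.pi * x) :=
  calc Real.pi * x * (1 - x) / 2 * (2 + x * (1 - x))
      ≤ π * x - (π * x) ^ 3 / 6 :=
        mul_one_sub_mul_two_add_le_sub_cube_div_six hx.1.le hx.2
    _ < Real.sin (Real.pi * x) := sin_gt_sub_cube (mul_pos pi_pos hx.1)
end

section
/- Fix a ∈ (0, 1/2] and define, for r ∈ (0,1), F(r) = [r⁴·sin(πa) − 2a(1−a)·r²·r'²·K_a(r) + 2(1−a)·(r'² − r²)·(E_a(r) − r'²·K_a(r))] / (r'²·r⁴), where r' = √(1−r²). Then F is strictly increasing on (0, 1). -/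
open Real Set Filter Topology

namespace Stmt10Aux

noncomputable def A (a : ℝ) (n : ℕ) : ℝ :=
  Polynomial.eval a (ascPochhammer ℝ n) * Polynomial.eval (1 - a) (ascPochhammer ℝ n)
    / (Nat.factorial n : ℝ) ^ 2

noncomputable def B (a : ℝ) (n : ℕ) : ℝ :=
  Polynomial.eval (a - 1) (ascPochhammer ℝ n) * Polynomial.eval (1 - a) (ascPochhammer ℝ n)
    / (Nat.factorial n : ℝ) ^ 2

lemma A_zero (a : ℝ) : A a 0 = 1 := by simp [A]

lemma B_zero (a : ℝ) : B a 0 = 1 := by simp [B]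

lemma poch_eval_succ (x : ℝ) (n : ℕ) :
    Polynomial.eval x (ascPochhammer ℝ (n+1)) =
      Polynomial.eval x (ascPochhammer ℝ n) * (x + n) :=
  ascPochhammer_succ_eval n x

lemma poch_eval_succ_left (x : ℝ) (n : ℕ) :
    Polynomial.eval x (ascPochhammer ℝ (n+1)) =
      x * Polynomial.eval (x + 1) (ascPochhammer ℝ n) := by
  rw [ascPochhammer_succ_left, Polynomial.eval_mul, Polynomial.eval_X, Polynomial.eval_comp,
    Polynomial.eval_add, Polynomial.eval_X, Polynomial.eval_one]

lemma fact_succ_sq (n : ℕ) :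
    ((Nat.factorial (n+1) : ℝ))^2 = ((n:ℝ)+1)^2 * ((Nat.factorial n : ℝ))^2 := by
  rw [Nat.factorial_succ]
  push_cast
  ring

lemma A_succ (a : ℝ) (n : ℕ) :
    A a (n+1) = A a n * ((a + n) * ((1 - a) + n)) / ((n:ℝ)+1)^2 := by
  have h : ((Nat.factorial n : ℝ)) ≠ 0 := Nat.cast_ne_zero.mpr (Nat.factorial_ne_zero n)
  have h1 : ((n:ℝ)+1) ≠ 0 := by positivity
  rw [A, A, poch_eval_succ, poch_eval_succ, fact_succ_sq]
  field_simp

lemma B_succ (a : ℝ) (n : ℕ) :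
    B a (n+1) = B a n * (((a-1) + n) * ((1 - a) + n)) / ((n:ℝ)+1)^2 := by
  have h : ((Nat.factorial n : ℝ)) ≠ 0 := Nat.cast_ne_zero.mpr (Nat.factorial_ne_zero n)
  have h1 : ((n:ℝ)+1) ≠ 0 := by positivity
  rw [B, B, poch_eval_succ, poch_eval_succ, fact_succ_sq]
  field_simp

lemma B_eq_A (a : ℝ) (n : ℕ) (ha : a + (n:ℝ) ≠ 0) :
    B a (n+1) = A a (n+1) * (a - 1) / (a + n) := by
  rw [A, B, poch_eval_succ_left (a-1) n, poch_eval_succ a n]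
  have h2 : a - 1 + 1 = a := by ring
  rw [h2]
  field_simp

lemma A_one (a : ℝ) : A a 1 = a * (1-a) := by
  have h := A_succ a 0
  rw [A_zero] at h
  rw [h]; norm_num

lemma B_one (a : ℝ) : B a 1 = (a-1) * (1-a) := by
  have h := B_succ a 0
  rw [B_zero] at h
  rw [h]; norm_num

lemma A_two (a : ℝ) : A a 2 = a * (1-a) * ((a+1) * (2-a)) / 4 := by
  have h := A_succ a 1
  rw [A_one] at h
  rw [h]; push_cast; ring

lemma B_two (a : ℝ) : B a 2 = (a-1) * (1-a) * (a * (2-a)) / 4 := by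
  have h := B_succ a 1
  rw [B_one] at h
  rw [h]; push_cast; ring

noncomputable def c (a : ℝ) (k : ℕ) : ℝ := A a k * (1 + (1-a)*k) / ((k:ℝ)+1)

noncomputable def L (a : ℝ) : ℝ := Real.sin (π * a) / π

noncomputable def t (a : ℝ) (n : ℕ) : ℝ :=
  2 * L a - 2*((n:ℝ)+2)*(A a (n+2) - B a (n+2)) + 2*(1-a)*(c a (n+1))

noncomputable def chi (a : ℝ) (k : ℕ) : ℝ :=
  ((k:ℝ)+1) * (A a (k+1) - B a (k+1)) - (1-a) * c a k

lemma t_zero (a : ℝ) : t a 0 = 2 * L a - a*(1-a)*(2-a)*(1+a) := by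
  rw [t, c, A_two, B_two, A_one]
  push_cast
  ring

lemma poch_eval_prod (x : ℝ) (n : ℕ) :
    Polynomial.eval x (ascPochhammer ℝ n) = ∏ j ∈ Finset.range n, (x + j) := by
  induction n with
  | zero => simp
  | succ n ih => rw [ascPochhammer_succ_eval, ih, Finset.prod_range_succ]

lemma poch_pos {x : ℝ} (hx : 0 < x) (n : ℕ) : 0 < Polynomial.eval x (ascPochhammer ℝ n) := by
  induction n with
  | zero => simp
  | succ n ih => rw [ascPochhammer_succ_eval]; positivity

variable {a : ℝ} (ha : 0 < a) (ha2 : a ≤ 1/2)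

include ha ha2 in
lemma A_pos (n : ℕ) : 0 < A a n := by
  have h1 : 0 < 1 - a := by linarith
  exact div_pos (mul_pos (poch_pos ha n) (poch_pos h1 n)) (by positivity)

include ha ha2 in
lemma A_succ_le (n : ℕ) : A a (n+1) ≤ A a n := by
  rw [A_succ]
  rw [div_le_iff₀ (by positivity)]
  have hA := A_pos ha ha2 n
  have key : (a + n) * ((1-a) + n) ≤ ((n:ℝ)+1)^2 := by nlinarith [sq_nonneg (a - 1/2)]
  nlinarith

include ha ha2 in
lemma A_le_one (n : ℕ) : A a n ≤ 1 := by
  induction n with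
  | zero => rw [A_zero]
  | succ n ih => exact le_trans (A_succ_le ha ha2 n) ih

include ha ha2 in
lemma B_abs (n : ℕ) : |B a n| ≤ 1 := by
  induction n with
  | zero => rw [B_zero]; norm_num
  | succ n ih =>
    rw [B_succ, abs_div, abs_mul, abs_mul]
    have h1 : |a - 1 + (n:ℝ)| ≤ (n:ℝ)+1 := by
      rw [abs_le]
      constructor <;> [nlinarith [Nat.cast_nonneg (α := ℝ) n];
        nlinarith [Nat.cast_nonneg (α := ℝ) n]]
    have h2 : |1 - a + (n:ℝ)| ≤ (n:ℝ)+1 := by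
      rw [abs_le]
      constructor <;> [nlinarith [Nat.cast_nonneg (α := ℝ) n];
        nlinarith [Nat.cast_nonneg (α := ℝ) n]]
    have h3 : |((n:ℝ)+1)^2| = ((n:ℝ)+1)^2 := abs_of_nonneg (by positivity)
    rw [h3]
    rw [div_le_one (by positivity)]
    have hb0 := abs_nonneg (B a n)
    have hb1 := abs_nonneg (a - 1 + (n:ℝ))
    have hb2 := abs_nonneg (1 - a + (n:ℝ))
    nlinarith [mul_le_mul h1 h2 hb2 (by positivity : (0:ℝ) ≤ (n:ℝ)+1)]

include ha in
lemma chi_zero : chi a 0 = 0 := by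
  have h0 : a + ((0:ℕ):ℝ) ≠ 0 := by push_cast; linarith
  rw [chi, c, B_eq_A a 0 h0, A_succ, A_zero]
  push_cast
  field_simp
  ring

lemma t_eq_chi (n : ℕ) : t a n = 2 * (L a - chi a (n+1)) := by
  rw [t, chi]
  push_cast
  ring

include ha in
lemma chi_succ (k : ℕ) : chi a (k+1) = chi a k +
    (1-a)*a*(2-a)*(1+a) * A a k / (((k:ℝ)+1)*((k:ℝ)+2)) := by
  have hk1 : a + ((k:ℕ):ℝ) ≠ 0 := by positivity
  have hk2 : a + (((k+1):ℕ):ℝ) ≠ 0 := by push_cast; positivity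
  rw [chi, chi, c, c, B_eq_A a (k+1) hk2, B_eq_A a k hk1,
    A_succ a (k+1), A_succ a k]
  push_cast
  have h1 : ((k:ℝ)+1) ≠ 0 := by positivity
  have h2 : ((k:ℝ)+2) ≠ 0 := by positivity
  have h3 : a + (k:ℝ) ≠ 0 := by positivity
  have h4 : a + ((k:ℝ)+1) ≠ 0 := by positivity
  field_simp
  ring

include ha in
lemma t_sub (n : ℕ) : t a (n+1) - t a n =
    -2*a*(1-a)*(A a (n+2) - A a (n+1)) + 2*(1-a)*(B a (n+3) - 2*B a (n+2))
      - 2*(1-a)*(A a (n+3) - 3*A a (n+2) + 2*A a (n+1)) := by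
  have hk2 : a + (((n+1):ℕ):ℝ) ≠ 0 := by push_cast; positivity
  have hk3 : a + (((n+2):ℕ):ℝ) ≠ 0 := by push_cast; positivity
  rw [t, t, c, c, B_eq_A a (n+2) hk3, B_eq_A a (n+1) hk2,
    A_succ a (n+2), A_succ a (n+1)]
  push_cast
  have h1 : ((n:ℝ)+2) ≠ 0 := by positivity
  have h2 : ((n:ℝ)+3) ≠ 0 := by positivity
  have h4 : a + ((n:ℝ)+1) ≠ 0 := by positivity
  have h5 : a + ((n:ℝ)+2) ≠ 0 := by positivity
  field_simp
  ring

include ha in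
lemma nA_tendsto (ha1 : a < 1) : Tendsto (fun n : ℕ => (n:ℝ) * A a n) atTop
    (𝓝 ((Real.Gamma a * Real.Gamma (1 - a))⁻¹)) := by
  have h1a : 0 < 1 - a := by linarith
  have hG : (0:ℝ) < Real.Gamma a * Real.Gamma (1 - a) :=
    mul_pos (Real.Gamma_pos_of_pos ha) (Real.Gamma_pos_of_pos h1a)
  have hGt : Tendsto (fun n : ℕ => Real.GammaSeq a n * Real.GammaSeq (1-a) n) atTop
      (𝓝 (Real.Gamma a * Real.Gamma (1 - a))) :=
    (Real.GammaSeq_tendsto_Gamma a).mul (Real.GammaSeq_tendsto_Gamma (1-a))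
  have hGinv := hGt.inv₀ (ne_of_gt hG)
  have h2 : Tendsto (fun n : ℕ => (n:ℝ)/((n:ℝ) + a)) atTop (𝓝 1) :=
    tendsto_natCast_div_add_atTop a
  have h3 : Tendsto (fun n : ℕ => (n:ℝ)/((n:ℝ) + (1-a))) atTop (𝓝 1) :=
    tendsto_natCast_div_add_atTop (1-a)
  have hcomb := (h2.mul h3).mul hGinv
  rw [one_mul, one_mul] at hcomb
  apply hcomb.congr'
  filter_upwards [eventually_ge_atTop 1] with n hn
  have hn0 : (0:ℝ) < (n:ℝ) := by exact_mod_cast hn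
  have hfact : ((Nat.factorial n : ℝ)) ≠ 0 := Nat.cast_ne_zero.mpr (Nat.factorial_ne_zero n)
  have hpow : (n:ℝ)^(a:ℝ) * (n:ℝ)^((1-a):ℝ) = (n:ℝ) := by
    rw [← Real.rpow_add hn0]
    norm_num
  have hPa : (0:ℝ) < ∏ j ∈ Finset.range n, (a + j) := by
    apply Finset.prod_pos; intro j _; positivity
  have hP1a : (0:ℝ) < ∏ j ∈ Finset.range n, ((1-a) + j) := by
    apply Finset.prod_pos; intro j _; positivity
  have hga : Real.GammaSeq a n = (n:ℝ)^(a:ℝ) * (Nat.factorial n : ℝ) /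
      ((∏ j ∈ Finset.range n, (a + j)) * (a + n)) := by
    rw [Real.GammaSeq, Finset.prod_range_succ]
  have hg1a : Real.GammaSeq (1-a) n = (n:ℝ)^((1-a):ℝ) * (Nat.factorial n : ℝ) /
      ((∏ j ∈ Finset.range n, ((1-a) + j)) * ((1-a) + n)) := by
    rw [Real.GammaSeq, Finset.prod_range_succ]
  rw [A, poch_eval_prod, poch_eval_prod, hga, hg1a]
  have han : a + (n:ℝ) ≠ 0 := by positivity
  have h1an : (1-a) + (n:ℝ) ≠ 0 := by positivity
  have hna : (n:ℝ) + a ≠ 0 := by positivity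
  have hn1a : (n:ℝ) + (1-a) ≠ 0 := by positivity
  have hrp : (0:ℝ) < (n:ℝ)^(a:ℝ) := Real.rpow_pos_of_pos hn0 _
  have hrp2 : (0:ℝ) < (n:ℝ)^((1-a):ℝ) := Real.rpow_pos_of_pos hn0 _
  have hv : (n:ℝ)^((1-a):ℝ) = (n:ℝ)/(n:ℝ)^(a:ℝ) := by
    rw [eq_div_iff (ne_of_gt hrp)]; linarith [hpow]
  rw [hv]
  field_simp
  ring

include ha ha2 in
lemma L_eq : L a = (Real.Gamma a * Real.Gamma (1 - a))⁻¹ := by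
  have hs : 0 < Real.sin (π * a) :=
    Real.sin_pos_of_pos_of_lt_pi (by positivity)
      (by nlinarith [Real.pi_pos])
  rw [Real.Gamma_mul_Gamma_one_sub a, L]
  rw [inv_div]

include ha ha2 in
lemma phi_tendsto : Tendsto (fun k : ℕ => ((k:ℝ)+1) * (A a (k+1) - B a (k+1))) atTop
    (𝓝 (L a)) := by
  have ha1 : a < 1 := lt_of_le_of_lt ha2 (by norm_num)
  have hshift : Tendsto (fun k : ℕ => (((k:ℕ):ℝ)+1) * A a (k+1)) atTop
      (𝓝 ((Real.Gamma a * Real.Gamma (1 - a))⁻¹)) := by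
    have h := (nA_tendsto ha ha1).comp (tendsto_add_atTop_nat 1)
    apply h.congr
    intro k
    simp only [Function.comp]
    push_cast
    ring
  have hfrac : Tendsto (fun k : ℕ => ((k:ℝ)+1)/((k:ℝ)+a)) atTop (𝓝 1) := by
    have h := (tendsto_natCast_div_add_atTop (a-1) (𝕜 := ℝ)).comp (tendsto_add_atTop_nat 1)
    apply h.congr
    intro k
    simp only [Function.comp]
    push_cast
    ring_nf
  have hcomb := hshift.mul hfrac
  rw [mul_one] at hcomb
  rw [L_eq ha ha2]
  apply hcomb.congr
  intro k
  have hak : a + (k:ℝ) ≠ 0 := by positivity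
  rw [B_eq_A a k hak]
  field_simp
  ring

include ha ha2 in
lemma chi_mono : Monotone (chi a) := by
  apply monotone_nat_of_le_succ
  intro k
  rw [chi_succ ha k]
  have hA := A_pos ha ha2 k
  have h : 0 ≤ (1-a)*a*(2-a)*(1+a) * A a k / (((k:ℝ)+1)*((k:ℝ)+2)) := by
    apply div_nonneg _ (by positivity)
    have h4 := mul_pos (mul_pos (mul_pos (show (0:ℝ) < 1-a by linarith)
      ha) (show (0:ℝ) < 2-a by linarith)) (show (0:ℝ) < 1+a by linarith)
    nlinarith [mul_pos h4 hA]
  linarith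

include ha ha2 in
lemma chi_le_L (k : ℕ) : chi a k ≤ L a := by
  apply ge_of_tendsto (phi_tendsto ha ha2)
  filter_upwards [eventually_ge_atTop k] with K hK
  have h1 : chi a k ≤ chi a K := chi_mono ha ha2 hK
  have h2 : chi a K ≤ ((K:ℝ)+1) * (A a (K+1) - B a (K+1)) := by
    rw [chi]
    have hc : 0 ≤ c a K := by
      rw [c]
      have := (A_pos ha ha2 K).le
      have h1a : (0:ℝ) ≤ 1 - a := by linarith
      positivity
    nlinarith [hc]
  linarith

include ha ha2 in
lemma t_pos (n : ℕ) : 0 < t a n := by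
  rw [t_eq_chi]
  have h1 := chi_le_L ha ha2 (n+2)
  have h2 := chi_succ ha (n+1)
  have hA := A_pos ha ha2 (n+1)
  have hstep : 0 < (1-a)*a*(2-a)*(1+a) * A a (n+1) / ((((n:ℝ)+1)+1)*(((n:ℝ)+1)+2)) := by
    apply div_pos _ (by positivity)
    have h4 := mul_pos (mul_pos (mul_pos (show (0:ℝ) < 1-a by linarith)
      ha) (show (0:ℝ) < 2-a by linarith)) (show (0:ℝ) < 1+a by linarith)
    exact mul_pos h4 hA
  push_cast at h2 hstep ⊢
  linarith [hstep, h1, h2]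

include ha ha2 in
lemma t_le_two (n : ℕ) : t a n ≤ 2 := by
  rw [t_eq_chi]
  have h1 : chi a 0 ≤ chi a (n+1) := chi_mono ha ha2 (Nat.zero_le _)
  rw [chi_zero ha] at h1
  have hL : L a ≤ 1 := by
    rw [L]
    rw [div_le_one Real.pi_pos]
    have := Real.sin_le_one (π * a)
    linarith [Real.pi_gt_three]
  linarith

variable {x : ℝ} (hx0 : 0 ≤ x) (hx1 : x < 1)

include ha ha2 hx0 hx1 in
lemma sumA : Summable (fun n : ℕ => A a n * x ^ n) := by
  apply Summable.of_nonneg_of_le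
    (fun n => by have := (A_pos ha ha2 n).le; positivity)
    (fun n => by
      have h1 := A_le_one ha ha2 n
      have h2 : (0:ℝ) ≤ x ^ n := by positivity
      nlinarith [(A_pos ha ha2 n).le])
    (summable_geometric_of_lt_one hx0 hx1)

include ha ha2 hx0 hx1 in
lemma sumB : Summable (fun n : ℕ => B a n * x ^ n) := by
  apply Summable.of_norm
  apply Summable.of_nonneg_of_le (fun n => norm_nonneg _)
    (fun n => ?_) (summable_geometric_of_lt_one hx0 hx1)
  rw [norm_mul, norm_pow]
  have h1 := B_abs ha ha2 n
  have h2 : ‖x‖ = x := by rw [Real.norm_eq_abs, abs_of_nonneg hx0]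
  rw [h2]
  have h3 : (0:ℝ) ≤ x ^ n := by positivity
  calc ‖B a n‖ * x ^ n ≤ 1 * x ^ n := by
        apply mul_le_mul_of_nonneg_right _ h3
        rwa [Real.norm_eq_abs]
    _ = x ^ n := one_mul _

include ha ha2 hx0 hx1 in
lemma sumT : Summable (fun n : ℕ => t a n * x ^ n) := by
  apply Summable.of_nonneg_of_le
    (fun n => by have := (t_pos ha ha2 n).le; positivity)
    (fun n => ?_)
    ((summable_geometric_of_lt_one hx0 hx1).mul_left 2)
  have h1 := t_le_two ha ha2 n
  have h3 : (0:ℝ) ≤ x ^ n := by positivity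
  nlinarith [(t_pos ha ha2 n).le]

include ha ha2 hx0 hx1 in
lemma star :
    (∑' n : ℕ, t a n * x ^ n) * ((1-x) * x^2) =
      2*(L a)*x^2 - 2*a*(1-a)*x*(1-x)*(∑' n : ℕ, A a n * x ^ n)
        + 2*(1-a)*(1-2*x)*((∑' n : ℕ, B a n * x ^ n)
            - (1-x)*(∑' n : ℕ, A a n * x ^ n)) := by
  set SA := ∑' n : ℕ, A a n * x ^ n with hSAdef
  set SB := ∑' n : ℕ, B a n * x ^ n with hSBdef
  set T := ∑' n : ℕ, t a n * x ^ n with hTdef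
  have hA : HasSum (fun n : ℕ => A a n * x ^ n) SA := (sumA ha ha2 hx0 hx1).hasSum
  have hB : HasSum (fun n : ℕ => B a n * x ^ n) SB := (sumB ha ha2 hx0 hx1).hasSum
  have hT : HasSum (fun n : ℕ => t a n * x ^ n) T := (sumT ha ha2 hx0 hx1).hasSum
  have hA1 : HasSum (fun n : ℕ => A a (n+1) * x ^ (n+1))
      (SA - ∑ i ∈ Finset.range 1, A a i * x ^ i) := (hasSum_nat_add_iff' 1).mpr hA
  have hA2 : HasSum (fun n : ℕ => A a (n+2) * x ^ (n+2))
      (SA - ∑ i ∈ Finset.range 2, A a i * x ^ i) := (hasSum_nat_add_iff' 2).mpr hA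
  have hA3 : HasSum (fun n : ℕ => A a (n+3) * x ^ (n+3))
      (SA - ∑ i ∈ Finset.range 3, A a i * x ^ i) := (hasSum_nat_add_iff' 3).mpr hA
  have hB2 : HasSum (fun n : ℕ => B a (n+2) * x ^ (n+2))
      (SB - ∑ i ∈ Finset.range 2, B a i * x ^ i) := (hasSum_nat_add_iff' 2).mpr hB
  have hB3 : HasSum (fun n : ℕ => B a (n+3) * x ^ (n+3))
      (SB - ∑ i ∈ Finset.range 3, B a i * x ^ i) := (hasSum_nat_add_iff' 3).mpr hB
  have hT1 : HasSum (fun n : ℕ => t a (n+1) * x ^ (n+1))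
      (T - ∑ i ∈ Finset.range 1, t a i * x ^ i) := (hasSum_nat_add_iff' 1).mpr hT
  have hTx : HasSum (fun n : ℕ => t a n * x ^ (n+1)) (T * x) := by
    have h := hT.mul_right x
    apply h.congr_fun
    intro n
    ring
  have hdiff : HasSum (fun n : ℕ => (t a (n+1) - t a n) * x ^ (n+3))
      (((T - ∑ i ∈ Finset.range 1, t a i * x ^ i) - T * x) * x^2) := by
    have h0 := (hT1.sub hTx).mul_right (x^2)
    apply h0.congr_fun
    intro n
    ring
  have hcomb : HasSum (fun n : ℕ => (t a (n+1) - t a n) * x ^ (n+3))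
      ((-2*a*(1-a)) * ((SA - ∑ i ∈ Finset.range 2, A a i * x ^ i) * x
          - (SA - ∑ i ∈ Finset.range 1, A a i * x ^ i) * x^2)
        + (2*(1-a)) * ((SB - ∑ i ∈ Finset.range 3, B a i * x ^ i)
          - 2 * ((SB - ∑ i ∈ Finset.range 2, B a i * x ^ i) * x))
        - (2*(1-a)) * ((SA - ∑ i ∈ Finset.range 3, A a i * x ^ i)
          - 3 * ((SA - ∑ i ∈ Finset.range 2, A a i * x ^ i) * x)
          + 2 * ((SA - ∑ i ∈ Finset.range 1, A a i * x ^ i) * x^2))) := by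
    have e1 := hA1.mul_right (x^2)
    have e2 := hA2.mul_right x
    have f2 := hB2.mul_right x
    have h0 := (((e2.sub e1).mul_left (-2*a*(1-a))).add
      ((hB3.sub (f2.mul_left 2)).mul_left (2*(1-a)))).sub
      (((hA3.sub (e2.mul_left 3)).add (e1.mul_left 2)).mul_left (2*(1-a)))
    apply h0.congr_fun
    intro n
    rw [t_sub ha n]
    ring
  have huniq := hdiff.unique hcomb
  simp only [Finset.sum_range_succ, Finset.sum_range_one] at huniq
  rw [A_zero, A_one, A_two, B_zero, B_one, B_two, t_zero] at huniq
  linear_combination huniq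

end Stmt10Aux

theorem stmt10 (a : ℝ) (ha : a ∈ Set.Ioc (0 : ℝ) (1/2)) :
    StrictMonoOn (fun r : ℝ =>
      (r^4 * Real.sin (Real.pi * a)
        - 2 * a * (1 - a) * r^2 * (Real.sqrt (1 - r^2))^2 * Ka a r
        + 2 * (1 - a) * ((Real.sqrt (1 - r^2))^2 - r^2) *
            (Ea a r - (Real.sqrt (1 - r^2))^2 * Ka a r))
      / ((Real.sqrt (1 - r^2))^2 * r^4)) (Set.Ioo 0 1) := by
  obtain ⟨ha0, ha2⟩ := ha
  have key : ∀ r : ℝ, r ∈ Set.Ioo (0:ℝ) 1 →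
      (r^4 * Real.sin (Real.pi * a)
        - 2 * a * (1 - a) * r^2 * (Real.sqrt (1 - r^2))^2 * Ka a r
        + 2 * (1 - a) * ((Real.sqrt (1 - r^2))^2 - r^2) *
            (Ea a r - (Real.sqrt (1 - r^2))^2 * Ka a r))
      / ((Real.sqrt (1 - r^2))^2 * r^4)
      = π / 2 * ∑' n : ℕ, Stmt10Aux.t a n * (r^2) ^ n := by
    intro r hr
    obtain ⟨hr0, hr1⟩ := hr
    have hx0 : (0:ℝ) < r^2 := by positivity
    have hx1 : r^2 < 1 := by nlinarith
    have hsq : Real.sqrt (1 - r^2) ^ 2 = 1 - r^2 := Real.sq_sqrt (by nlinarith)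
    have hKa : Ka a r = π / 2 * ∑' n : ℕ, Stmt10Aux.A a n * (r^2) ^ n := by
      rw [Ka]
      congr 1
      apply tsum_congr
      intro n
      rw [Stmt10Aux.A, pow_mul]
    have hEa : Ea a r = π / 2 * ∑' n : ℕ, Stmt10Aux.B a n * (r^2) ^ n := by
      rw [Ea]
      congr 1
      apply tsum_congr
      intro n
      rw [Stmt10Aux.B, pow_mul]
    have hstar := Stmt10Aux.star ha0 ha2 hx0.le hx1
    have hL : π / 2 * (2 * Stmt10Aux.L a) = Real.sin (π * a) := by
      rw [Stmt10Aux.L]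
      field_simp
    have h4 : r^4 = (r^2)^2 := by ring
    rw [hsq, hKa, hEa, h4]
    rw [div_eq_iff (ne_of_gt (mul_pos (by linarith : (0:ℝ) < 1 - r^2) (pow_pos hx0 2)))]
    linear_combination (-(π/2)) * hstar - (r^2)^2 * hL
  intro r1 hr1 r2 hr2 hlt
  dsimp only
  rw [key r1 hr1, key r2 hr2]
  have hx1lt : r1^2 < r2^2 := by nlinarith [hr1.1, hr2.1]
  have hx10 : (0:ℝ) ≤ r1^2 := by positivity
  have hx20 : (0:ℝ) ≤ r2^2 := by positivity
  have hx21 : r2^2 < 1 := by nlinarith [hr2.1, hr2.2]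
  have hx11 : r1^2 < 1 := by nlinarith
  have hmain : (∑' n : ℕ, Stmt10Aux.t a n * (r1^2) ^ n)
      < ∑' n : ℕ, Stmt10Aux.t a n * (r2^2) ^ n := by
    apply Summable.tsum_lt_tsum_of_nonneg (i := 1)
    · intro n
      have := (Stmt10Aux.t_pos ha0 ha2 n).le
      positivity
    · intro n
      have ht := (Stmt10Aux.t_pos ha0 ha2 n).le
      have hp : (r1^2)^n ≤ (r2^2)^n := pow_le_pow_left₀ hx10 hx1lt.le n
      nlinarith [ht, hp]
    · have ht := Stmt10Aux.t_pos ha0 ha2 1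
      have : (r1^2)^1 < (r2^2)^1 := by simpa using hx1lt
      nlinarith [ht, this]
    · exact Stmt10Aux.sumT ha0 ha2 hx20 hx21
  have hpi : (0:ℝ) < π / 2 := by positivity
  exact mul_lt_mul_of_pos_left hmain hpi
end

section
/- Fix a ∈ (0, 1/2] and define, for r ∈ (0,1), F₃(r) = [2 − 2r² + a(1−a)r²]·(E_a(r) − r'²·K_a(r))/r² − 2a·r'²·K_a(r), where r' = √(1−r²). Then (2/π)·F₃(r) = a·[2 + a(1−a)]·Σ_{n=0}^∞ ((a)_{n+1}(1−a)_{n+1} / ((n+3)!·n!))·r^{2n+4}; in particular F₃(r) > 0 for all r ∈ (0,1). -/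
open Real Set Filter Topology

/-! Write `x = r²`, `K = ∑ kₙ xⁿ`, `E = ∑ eₙ xⁿ` and `I = ∑ kₙ xⁿ / (n + 1)`, where `kₙ`, `eₙ` are
the coefficients of `K_a`, `E_a`; all coefficients are bounded by `1`, so the series converge for
`|x| < 1`. Comparing coefficients through the Pochhammer recurrences gives
`E - (1 - x) K = a x I` and `(2 - 2x + a(1-a)x) I - 2(1 - x) K = (2 + a(1-a)) x² ∑ hₙ xⁿ`, with `hₙ`
the (positive) coefficients of the claimed series. Substituting the first identity into `F₃` and
then the second yields the formula, and positivity follows. -/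

open scoped Nat

theorem abs_ascPochhammer_eval_le_factorial {x : ℝ} (hx : |x| ≤ 1) (n : ℕ) :
    |(ascPochhammer ℝ n).eval x| ≤ n ! := by
  induction n with
  | zero => simp
  | succ n ih =>
    have hxn : |x + n| ≤ n + 1 := (abs_add_le x n).trans (by rw [Nat.abs_cast]; linarith)
    rw [ascPochhammer_succ_eval, abs_mul, Nat.factorial_succ, Nat.cast_mul, mul_comm _ (n ! : ℝ)]
    push_cast
    exact mul_le_mul ih hxn (abs_nonneg _) (by positivity)

theorem summable_mul_pow_of_abs_le {u : ℕ → ℝ} {C x : ℝ} (hu : ∀ n, |u n| ≤ C) (hx : |x| < 1) :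
    Summable fun n => u n * x ^ n := by
  refine .of_norm_bounded ((summable_geometric_of_lt_one (abs_nonneg x) hx).mul_left C) fun n => ?_
  rw [Real.norm_eq_abs, abs_mul, abs_pow]
  exact mul_le_mul_of_nonneg_right (hu n) (by positivity)

theorem hasSum_mul_pow_of_hasSum_succ {R : Type*} [CommRing R] [TopologicalSpace R]
    [IsTopologicalRing R] {u : ℕ → R} {x S : R} (h : HasSum (fun n => u (n + 1) * x ^ n) S) :
    HasSum (fun n => u n * x ^ n) (u 0 + x * S) := by
  refine (hasSum_nat_add_iff' 1).mp ?_
  rw [Finset.sum_range_one, pow_zero, mul_one, add_sub_cancel_left]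
  exact (h.mul_left x).congr_fun fun n => by ring

theorem ascPochhammer_succ_eval_left {S : Type*} [CommSemiring S] (n : ℕ) (x : S) :
    (ascPochhammer S (n + 1)).eval x = x * (ascPochhammer S n).eval (x + 1) := by
  simp [ascPochhammer_succ_left, Polynomial.eval_comp]

theorem abs_ascPochhammer_mul_div_factorial_sq_le_one {x y : ℝ} (hx : |x| ≤ 1) (hy : |y| ≤ 1)
    (n : ℕ) : |(ascPochhammer ℝ n).eval x * (ascPochhammer ℝ n).eval y / (n ! : ℝ) ^ 2| ≤ 1 := by
  rw [abs_div, abs_mul, abs_of_nonneg (by positivity : (0 : ℝ) ≤ (n ! : ℝ) ^ 2), sq]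
  exact div_le_one_of_le₀ (mul_le_mul (abs_ascPochhammer_eval_le_factorial hx n)
    (abs_ascPochhammer_eval_le_factorial hy n) (abs_nonneg _) (by positivity)) (by positivity)

noncomputable def kCoeff (a : ℝ) (n : ℕ) : ℝ :=
  (ascPochhammer ℝ n).eval a * (ascPochhammer ℝ n).eval (1 - a) / (n ! : ℝ) ^ 2

noncomputable def eCoeff (a : ℝ) (n : ℕ) : ℝ :=
  (ascPochhammer ℝ n).eval (a - 1) * (ascPochhammer ℝ n).eval (1 - a) / (n ! : ℝ) ^ 2

noncomputable def f3Coeff (a : ℝ) (n : ℕ) : ℝ :=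
  (ascPochhammer ℝ (n + 1)).eval a * (ascPochhammer ℝ (n + 1)).eval (1 - a) /
    ((n + 3)! * n ! : ℝ)

section Coefficients

variable (a : ℝ) (n : ℕ)

theorem kCoeff_zero : kCoeff a 0 = 1 := by simp [kCoeff]

theorem eCoeff_zero : eCoeff a 0 = 1 := by simp [eCoeff]

theorem kCoeff_succ :
    kCoeff a (n + 1) = kCoeff a n * ((a + n) * (1 - a + n) / (n + 1) ^ 2) := by
  simp only [kCoeff, ascPochhammer_succ_eval, Nat.factorial_succ]
  push_cast
  field_simp

theorem eCoeff_succ :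
    eCoeff a (n + 1) = kCoeff a n * ((a - 1) * (1 - a + n) / (n + 1) ^ 2) := by
  rw [eCoeff, kCoeff, ascPochhammer_succ_eval_left, sub_add_cancel, ascPochhammer_succ_eval,
    Nat.factorial_succ]
  push_cast
  field_simp

theorem f3Coeff_eq :
    f3Coeff a n = kCoeff a (n + 1) * ((n + 1) / ((n + 2) * (n + 3))) := by
  simp only [f3Coeff, kCoeff, Nat.factorial_succ]
  push_cast
  field_simp
  ring

theorem eCoeff_succ_sub_kCoeff_succ_add_kCoeff :
    eCoeff a (n + 1) - kCoeff a (n + 1) + kCoeff a n = a * (kCoeff a n / (n + 1)) := by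
  rw [eCoeff_succ, kCoeff_succ]
  field_simp
  ring

theorem kCoeff_f3Coeff_recurrence :
    2 * (kCoeff a (n + 2) / (n + 3)) - 2 * kCoeff a (n + 2) + 2 * kCoeff a (n + 1)
      - (2 - a * (1 - a)) * (kCoeff a (n + 1) / (n + 2)) = (2 + a * (1 - a)) * f3Coeff a n := by
  rw [f3Coeff_eq, kCoeff_succ a (n + 1)]
  push_cast
  field_simp
  ring

variable {a}

theorem abs_kCoeff_le_one (ha : a ∈ Icc 0 1) : |kCoeff a n| ≤ 1 :=
  abs_ascPochhammer_mul_div_factorial_sq_le_one (abs_le.2 ⟨by linarith [ha.1], ha.2⟩)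
    (abs_le.2 ⟨by linarith [ha.2], by linarith [ha.1]⟩) n

theorem abs_eCoeff_le_one (ha : a ∈ Icc 0 1) : |eCoeff a n| ≤ 1 :=
  abs_ascPochhammer_mul_div_factorial_sq_le_one
    (abs_le.2 ⟨by linarith [ha.1], by linarith [ha.2]⟩)
    (abs_le.2 ⟨by linarith [ha.2], by linarith [ha.1]⟩) n

theorem abs_kCoeff_div_succ_le_one (ha : a ∈ Icc 0 1) : |kCoeff a n / (n + 1)| ≤ 1 := by
  rw [abs_div, abs_of_pos (by positivity : (0 : ℝ) < n + 1)]
  exact div_le_one_of_le₀ ((abs_kCoeff_le_one n ha).trans (by linarith [n.cast_nonneg (α := ℝ)]))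
    (by positivity)

theorem abs_f3Coeff_le_one (ha : a ∈ Icc 0 1) : |f3Coeff a n| ≤ 1 := by
  have hfrac : (n + 1 : ℝ) / ((n + 2) * (n + 3)) ≤ 1 := by
    rw [div_le_one (by positivity)]
    nlinarith [n.cast_nonneg (α := ℝ)]
  rw [f3Coeff_eq, abs_mul, abs_of_nonneg (by positivity : (0 : ℝ) ≤ (n + 1) / ((n + 2) * (n + 3)))]
  exact mul_le_one₀ (abs_kCoeff_le_one (n + 1) ha) (by positivity) hfrac

theorem f3Coeff_pos (ha : a ∈ Ioo 0 1) : 0 < f3Coeff a n := by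
  have := ascPochhammer_pos (n + 1) a ha.1
  have := ascPochhammer_pos (n + 1) (1 - a) (by linarith [ha.2])
  unfold f3Coeff
  positivity

end Coefficients

section Series

variable {a x K E I H : ℝ}

theorem eSeries_sub_one_sub_mul_kSeries (hK : HasSum (fun n => kCoeff a n * x ^ n) K)
    (hE : HasSum (fun n => eCoeff a n * x ^ n) E)
    (hI : HasSum (fun n => kCoeff a n / (n + 1) * x ^ n) I) :
    E - (1 - x) * K = a * x * I := by
  have hshift : HasSum (fun n => (eCoeff a (n + 1) - kCoeff a (n + 1)) * x ^ n) (a * I - K) :=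
    ((hI.mul_left a).sub hK).congr_fun fun n => by
      linear_combination x ^ n * eCoeff_succ_sub_kCoeff_succ_add_kCoeff a n
  have h := (hasSum_mul_pow_of_hasSum_succ (u := fun n => eCoeff a n - kCoeff a n) hshift).unique
    ((hE.sub hK).congr_fun fun n => by ring)
  simp only [eCoeff_zero, kCoeff_zero, sub_self, zero_add] at h
  linear_combination -h

theorem kSeries_combination_eq_f3Series (hK : HasSum (fun n => kCoeff a n * x ^ n) K)
    (hI : HasSum (fun n => kCoeff a n / (n + 1) * x ^ n) I)
    (hH : HasSum (fun n => f3Coeff a n * x ^ n) H) :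
    (2 - 2 * x + a * (1 - a) * x) * I - 2 * (1 - x) * K = (2 + a * (1 - a)) * x ^ 2 * H := by
  set u : ℕ → ℝ := fun n => 2 * (kCoeff a n / (n + 1)) - 2 * kCoeff a n
  set v : ℕ → ℝ := fun n => 2 * kCoeff a n - (2 - a * (1 - a)) * (kCoeff a n / (n + 1))
  have hw : HasSum (fun n => (u (n + 1) + v n) * x ^ n) (x * ((2 + a * (1 - a)) * H)) := by
    have h := hasSum_mul_pow_of_hasSum_succ (u := fun n => u (n + 1) + v n) (x := x)
      ((hH.mul_left (2 + a * (1 - a))).congr_fun fun n => by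
        simp only [u, v]
        push_cast
        linear_combination x ^ n * kCoeff_f3Coeff_recurrence a n)
    have h0 : u 1 + v 0 = 0 := by
      simp only [u, v, kCoeff_succ a 0, kCoeff_zero]
      push_cast
      ring
    rwa [h0, zero_add] at h
  have hv : HasSum (fun n => v n * x ^ n) (2 * K - (2 - a * (1 - a)) * I) :=
    ((hK.mul_left 2).sub (hI.mul_left _)).congr_fun fun n => by ring
  have hu := hasSum_mul_pow_of_hasSum_succ (u := u) (x := x)
    ((hw.sub hv).congr_fun fun n => by ring)
  have h := hu.unique (((hI.mul_left 2).sub (hK.mul_left 2)).congr_fun fun n => by ring)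
  simp only [u, kCoeff_zero] at h
  linear_combination -h

end Series

noncomputable def F3 (a r : ℝ) : ℝ :=
  (2 - 2 * r ^ 2 + a * (1 - a) * r ^ 2) * (Ea a r - √(1 - r ^ 2) ^ 2 * Ka a r) / r ^ 2
    - 2 * a * √(1 - r ^ 2) ^ 2 * Ka a r

theorem Ka_eq_tsum (a r : ℝ) : Ka a r = π / 2 * ∑' n, kCoeff a n * (r ^ 2) ^ n := by
  simp only [Ka, kCoeff, pow_mul]

theorem Ea_eq_tsum (a r : ℝ) : Ea a r = π / 2 * ∑' n, eCoeff a n * (r ^ 2) ^ n := by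
  simp only [Ea, eCoeff, pow_mul]

theorem tsum_f3Coeff_mul_pow (a r : ℝ) :
    ∑' n, f3Coeff a n * r ^ (2 * n + 4) = (r ^ 2) ^ 2 * ∑' n, f3Coeff a n * (r ^ 2) ^ n := by
  rw [← tsum_mul_left]
  exact tsum_congr fun n => by ring

theorem tsum_f3Coeff_mul_pow_pos {a r : ℝ} (ha : a ∈ Ioo 0 1) (hr : r ∈ Ioo 0 1) :
    0 < ∑' n, f3Coeff a n * r ^ (2 * n + 4) := by
  have hx : |r ^ 2| < 1 := by
    rw [abs_of_nonneg (sq_nonneg r)]; exact pow_lt_one₀ hr.1.le hr.2 two_ne_zero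
  rw [tsum_f3Coeff_mul_pow]
  have hpos : ∀ n, 0 < f3Coeff a n * (r ^ 2) ^ n := fun n =>
    mul_pos (f3Coeff_pos n ha) (pow_pos (pow_pos hr.1 2) n)
  have hsum :=
    summable_mul_pow_of_abs_le (fun n => abs_f3Coeff_le_one n (Ioo_subset_Icc_self ha)) hx
  exact mul_pos (pow_pos (pow_pos hr.1 2) 2) (hsum.tsum_pos (fun n => (hpos n).le) 0 (hpos 0))

theorem F3_eq_tsum {a r : ℝ} (ha : a ∈ Icc 0 1) (hr : r ∈ Ioo 0 1) :
    F3 a r = π / 2 * (a * (2 + a * (1 - a)) * ∑' n, f3Coeff a n * r ^ (2 * n + 4)) := by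
  have hx : |r ^ 2| < 1 := by
    rw [abs_of_nonneg (sq_nonneg r)]; exact pow_lt_one₀ hr.1.le hr.2 two_ne_zero
  have hK := (summable_mul_pow_of_abs_le (fun n => abs_kCoeff_le_one n ha) hx).hasSum
  have hE := (summable_mul_pow_of_abs_le (fun n => abs_eCoeff_le_one n ha) hx).hasSum
  have hI := (summable_mul_pow_of_abs_le (fun n => abs_kCoeff_div_succ_le_one n ha) hx).hasSum
  have hH := (summable_mul_pow_of_abs_le (fun n => abs_f3Coeff_le_one n ha) hx).hasSum
  have h₁ := eSeries_sub_one_sub_mul_kSeries hK hE hI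
  have h₂ := kSeries_combination_eq_f3Series hK hI hH
  have hr0 : r ≠ 0 := hr.1.ne'
  rw [F3, Ka_eq_tsum, Ea_eq_tsum, sq_sqrt (by nlinarith [hr.1, hr.2]), tsum_f3Coeff_mul_pow]
  linear_combination (norm := (field_simp; ring))
    (2 - 2 * r ^ 2 + a * (1 - a) * r ^ 2) * (π / 2) / r ^ 2 * h₁ + π / 2 * a * h₂

theorem stmt12 (a : ℝ) (ha : a ∈ Set.Ioc (0 : ℝ) (1/2)) (r : ℝ) (hr : r ∈ Set.Ioo (0 : ℝ) 1) :
    2 / Real.pi * ((2 - 2 * r^2 + a * (1 - a) * r^2) *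
        (Ea a r - (Real.sqrt (1 - r^2))^2 * Ka a r) / r^2
        - 2 * a * (Real.sqrt (1 - r^2))^2 * Ka a r) =
      a * (2 + a * (1 - a)) * ∑' n : ℕ,
        (Polynomial.eval a (ascPochhammer ℝ (n + 1)) *
          Polynomial.eval (1 - a) (ascPochhammer ℝ (n + 1)) /
          ((Nat.factorial (n + 3) : ℝ) * (Nat.factorial n : ℝ))) * r ^ (2 * n + 4) ∧
    0 < (2 - 2 * r^2 + a * (1 - a) * r^2) *
        (Ea a r - (Real.sqrt (1 - r^2))^2 * Ka a r) / r^2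
        - 2 * a * (Real.sqrt (1 - r^2))^2 * Ka a r := by
  change 2 / π * F3 a r = _ ∧ 0 < F3 a r
  have ha' : a ∈ Ioo 0 1 := ⟨ha.1, ha.2.trans_lt (by norm_num)⟩
  rw [F3_eq_tsum (Ioo_subset_Icc_self ha') hr]
  have hπ : 2 / π * (π / 2) = 1 := by field_simp
  refine ⟨by rw [← mul_assoc, hπ, one_mul]; rfl, ?_⟩
  have hA : 0 < 2 + a * (1 - a) := by nlinarith [ha'.1, ha'.2]
  exact mul_pos (by positivity) (mul_pos (mul_pos ha'.1 hA) (tsum_f3Coeff_mul_pow_pos ha' hr))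
end
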